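/- The number of Ramanujan primes in the interval (x/2, x], i.e. π_R(x) − π_R(x/2), tends to infinity as x → ∞. -/

import Mathlib

open Real Filter

/-- Prime-counting function at a real argument. -/
noncomputable def pi' (x : ℝ) : ℕ := Nat.primeCounting ⌊x⌋₊

/-- The n-th Ramanujan prime: smallest positive integer R such that
π(x) − π(x/2) ≥ n for all real x ≥ R. -/
noncomputable def ramanujanPrime (n : ℕ) : ℕ :=
  sInf {R : ℕ | 0 < R ∧ ∀ x : ℝ, (R : ℝ) ≤ x → n ≤ pi' x - pi' (x / 2)}

/-- A number is a Ramanujan prime if it is `ramanujanPrime n` for some `n ≥ 1`. -/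
def IsRamanujanPrime (R : ℕ) : Prop := ∃ n : ℕ, 1 ≤ n ∧ ramanujanPrime n = R

/-- Ramanujan-prime-counting function. -/
noncomputable def piR (x : ℝ) : ℕ := {R : ℕ | IsRamanujanPrime R ∧ (R : ℝ) ≤ x}.ncard

/-- The n-th derived Ramanujan prime. -/
noncomputable def dRamanujanPrime (n : ℕ) : ℕ :=
  sInf {R : ℕ | 0 < R ∧ ∀ x : ℝ, (R : ℝ) ≤ x → n ≤ piR x - piR (x / 2)}

/-- A number is a derived Ramanujan prime. -/
def IsDRamanujanPrime (R : ℕ) : Prop := ∃ n : ℕ, 1 ≤ n ∧ dRamanujanPrime n = R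

/-- Derived-Ramanujan-prime-counting function. -/
noncomputable def piR' (x : ℝ) : ℕ := {R : ℕ | IsDRamanujanPrime R ∧ (R : ℝ) ≤ x}.ncard

/-!
Chebyshev's combination `log ⌊x⌋! - log ⌊x/2⌋! - log ⌊x/3⌋! - log ⌊x/5⌋! + log ⌊x/30⌋!` equals
`A x + o(x)` by Stirling, where `A = chebyshevConstant ≈ 0.92`, and it lies between
`ψ x - ψ (x/6)` and `ψ x` because its von Mangoldt weights lie in `[0, 1]` and equal `1` on
`(x/6, x]`. Hence `(A - ε) x ≤ θ x` and `ψ x ≤ (6A/5 + ε) x`, so the number `F n` of primes in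
`(n/2, n]` satisfies `F n ≳ (2A/5) n / log n` and `F n ≲ (7A/10) n / log (n/2)`.
As `4 · 2/5 > 2 · 7/10`, the difference `F N - F M` tends to infinity uniformly in `N ≥ 2M`, which
gives `R (m + k) ≤ 2 R m` for large `m`. Since `F` grows by at most one at each step, the
Ramanujan primes are strictly increasing, so `(x/2, x]` contains `R (m+1), …, R (m+k)` where
`R m` is the last Ramanujan prime `≤ x/2`.
-/

open Finset Asymptotics
open ArithmeticFunction hiding log
open scoped Chebyshev Nat

section RamanujanSeq

variable {F : ℕ → ℕ}

noncomputable def ramanujanSeq (F : ℕ → ℕ) (n : ℕ) : ℕ := sInf {R | 0 < R ∧ ∀ N, R ≤ N → n ≤ F N}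

lemma ramanujanSeq_le {n R : ℕ} (hR : 0 < R) (h : ∀ N, R ≤ N → n ≤ F N) :
    ramanujanSeq F n ≤ R :=
  Nat.sInf_le ⟨hR, h⟩

lemma ramanujanSeq_spec (hF : Tendsto F atTop atTop) (n : ℕ) :
    0 < ramanujanSeq F n ∧ ∀ N, ramanujanSeq F n ≤ N → n ≤ F N := by
  obtain ⟨X, hX⟩ := eventually_atTop.1 (hF.eventually_ge_atTop n)
  exact Nat.sInf_mem (s := {R | 0 < R ∧ ∀ N, R ≤ N → n ≤ F N})
    ⟨X + 1, by omega, fun N hN ↦ hX N (by omega)⟩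

lemma tendsto_ramanujanSeq (hF : Tendsto F atTop atTop) :
    Tendsto (ramanujanSeq F) atTop atTop := by
  refine tendsto_atTop.2 fun b ↦ ?_
  filter_upwards [eventually_gt_atTop ((range b).sup F)] with m hm
  by_contra! h
  have := (ramanujanSeq_spec hF m).2 _ le_rfl
  have := le_sup (f := F) (mem_range.2 h)
  omega

lemma ramanujanSeq_lt_succ (hF : Tendsto F atTop atTop) (h1 : F 1 = 0)
    (hstep : ∀ N, F (N + 1) ≤ F N + 1) (n : ℕ) : ramanujanSeq F n < ramanujanSeq F (n + 1) := by
  obtain ⟨hpos, hspec⟩ := ramanujanSeq_spec hF (n + 1)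
  set R := ramanujanSeq F (n + 1)
  have hR : 2 ≤ R := by
    by_contra! h
    have := hspec 1 (by omega)
    omega
  suffices ramanujanSeq F n ≤ R - 1 by omega
  refine ramanujanSeq_le (by omega) fun N hN ↦ ?_
  rcases hN.eq_or_lt with rfl | hN
  · have := hstep (R - 1)
    have := hspec (R - 1 + 1) (by omega)
    omega
  · exact (hspec N (by omega)).trans' (Nat.le_succ n)

lemma strictMono_ramanujanSeq (hF : Tendsto F atTop atTop) (h1 : F 1 = 0)
    (hstep : ∀ N, F (N + 1) ≤ F N + 1) : StrictMono (ramanujanSeq F) :=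
  strictMono_nat_of_lt_succ (ramanujanSeq_lt_succ hF h1 hstep)

lemma ramanujanSeq_add_le_two_mul (hF : Tendsto F atTop atTop)
    (hgap : ∀ k, ∀ᶠ M in atTop, ∀ N, 2 * M ≤ N → F M + k ≤ F N) (k : ℕ) :
    ∀ᶠ m in atTop, ramanujanSeq F (m + k) ≤ 2 * ramanujanSeq F m := by
  filter_upwards [(tendsto_ramanujanSeq hF).eventually (hgap k)] with m hm
  obtain ⟨hpos, hspec⟩ := ramanujanSeq_spec hF m
  exact ramanujanSeq_le (by omega) fun N hN ↦
    (Nat.add_le_add_right (hspec _ le_rfl) k).trans (hm N hN)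

end RamanujanSeq

section Counting

variable {s : ℕ → ℕ}

lemma lt_ncard_setOf_le_iff (hs : StrictMono s) {j M : ℕ} :
    j < {n | s n ≤ M}.ncard ↔ s j ≤ M := by
  have hfin : {n | s n ≤ M}.Finite := (Set.finite_Iic M).subset fun n hn ↦ (hs.id_le n).trans hn
  constructor
  · intro hj
    by_contra! hM
    have hsub : {n | s n ≤ M} ⊆ Set.Iio j := fun n hn ↦ hs.lt_iff_lt.1 (lt_of_le_of_lt hn hM)
    have := Set.ncard_le_ncard hsub (Set.finite_Iio j)
    rw [Set.ncard_Iio_nat] at this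
    omega
  · intro hj
    have hsub : Set.Iic j ⊆ {n | s n ≤ M} := fun n hn ↦ (hs.monotone hn).trans hj
    have := Set.ncard_le_ncard hsub hfin
    rw [Set.ncard_Iic_nat] at this
    omega

lemma tendsto_ncard_sub_ncard_half (hs : StrictMono s)
    (hdouble : ∀ k, ∀ᶠ m in atTop, s (m + k) ≤ 2 * s m) :
    Tendsto (fun N ↦ {n | s n ≤ N}.ncard - {n | s n ≤ N / 2}.ncard) atTop atTop := by
  refine tendsto_atTop.2 fun k ↦ ?_
  obtain ⟨m₀, hm₀⟩ := eventually_atTop.1 (hdouble k)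
  filter_upwards [eventually_ge_atTop (2 * s m₀)] with N hN
  set c := {n | s n ≤ N / 2}.ncard
  have hc : m₀ < c := (lt_ncard_setOf_le_iff hs).2 (by omega)
  have hlast : s (c - 1) ≤ N / 2 := (lt_ncard_setOf_le_iff hs).1 (by omega)
  have hnext : c - 1 + k < {n | s n ≤ N}.ncard :=
    (lt_ncard_setOf_le_iff hs).2 ((hm₀ (c - 1) (by omega)).trans (by omega))
  omega

end Counting

noncomputable def stirlingMain (x : ℝ) : ℝ := x * log x - x

lemma abs_stirlingMain_sub_le {n : ℕ} {x : ℝ} (hn : 1 ≤ n) (hnx : n ≤ x) (hx : x ≤ n + 1) :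
    |stirlingMain x - stirlingMain n| ≤ log x + 1 := by
  have hn0 : (0 : ℝ) < n := by exact_mod_cast hn
  have hx0 : 0 < x := hn0.trans_le hnx
  have hlogx : 0 ≤ log x := log_nonneg (le_trans (by exact_mod_cast hn) hnx)
  have hlog_nonneg : 0 ≤ log (x / n) := log_nonneg ((one_le_div hn0).2 hnx)
  have hlog_le : n * log (x / n) ≤ x - n := by
    have := mul_le_mul_of_nonneg_left (log_le_sub_one_of_pos (div_pos hx0 hn0)) hn0.le
    rwa [mul_sub, mul_div_cancel₀ _ hn0.ne', mul_one] at this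
  have key : stirlingMain x - stirlingMain n = (x - n) * log x + n * log (x / n) - (x - n) := by
    rw [stirlingMain, stirlingMain, log_div hx0.ne' hn0.ne']
    ring
  rw [key, abs_le]
  constructor <;> linarith [mul_nonneg (sub_nonneg.2 hnx) hlogx, mul_nonneg hn0.le hlog_nonneg,
    mul_le_mul_of_nonneg_right (show x - n ≤ 1 by linarith) hlogx]

lemma log_factorial_le_stirlingMain_add (n : ℕ) (hn : n ≠ 0) :
    log n ! ≤ stirlingMain n + log n / 2 + 1 := by
  obtain ⟨m, rfl⟩ := Nat.exists_eq_succ_of_ne_zero hn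
  have hseq : log (Stirling.stirlingSeq (m + 1)) ≤ 1 - log 2 / 2 := by
    have := Stirling.log_stirlingSeq'_antitone (Nat.zero_le m)
    simp only [Function.comp_apply, Nat.succ_eq_add_one, zero_add,
      Stirling.stirlingSeq_one] at this
    rwa [log_div (exp_pos 1).ne' (by positivity), log_exp, log_sqrt zero_le_two] at this
  have hm : (0 : ℝ) < (m + 1 : ℕ) := by positivity
  have := Stirling.log_stirlingSeq_formula (m + 1)
  rw [log_mul two_ne_zero hm.ne', log_div hm.ne' (exp_pos 1).ne', log_exp] at this
  rw [stirlingMain]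
  linarith

lemma stirlingMain_le_log_factorial (n : ℕ) (hn : n ≠ 0) : stirlingMain n ≤ log n ! := by
  have h := Stirling.le_log_factorial_stirling hn
  have h1 : 0 ≤ log (n : ℝ) := log_natCast_nonneg n
  have h2 : 0 ≤ log (2 * π) := log_nonneg (by linarith [pi_gt_three])
  rw [stirlingMain]
  linarith

noncomputable def logFactorialFloor (x : ℝ) : ℝ := log (⌊x⌋₊ ! : ℝ)

lemma abs_logFactorialFloor_sub_le {x : ℝ} (hx : 1 ≤ x) :
    |logFactorialFloor x - stirlingMain x| ≤ 2 * log x + 2 := by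
  have hn : 1 ≤ ⌊x⌋₊ := Nat.le_floor (by exact_mod_cast hx)
  have hnx : (⌊x⌋₊ : ℝ) ≤ x := Nat.floor_le (by linarith)
  have hlogn : log (⌊x⌋₊ : ℝ) ≤ log x := log_le_log (by exact_mod_cast hn) hnx
  have hlogn0 : 0 ≤ log (⌊x⌋₊ : ℝ) := log_natCast_nonneg _
  have hmain := abs_stirlingMain_sub_le hn hnx (Nat.lt_floor_add_one x).le
  have hup := log_factorial_le_stirlingMain_add _ (by omega : ⌊x⌋₊ ≠ 0)
  have hlow := stirlingMain_le_log_factorial _ (by omega : ⌊x⌋₊ ≠ 0)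
  rw [logFactorialFloor, abs_le]
  rw [abs_le] at hmain
  constructor <;> linarith [hmain.1, hmain.2]

lemma isLittleO_logFactorialFloor_sub_stirlingMain :
    (fun x ↦ logFactorialFloor x - stirlingMain x) =o[atTop] id := by
  have hlog : (fun x : ℝ ↦ 2 * log x + 2) =o[atTop] id :=
    (isLittleO_log_id_atTop.const_mul_left 2).add (isLittleO_const_id_atTop 2)
  refine IsBigO.trans_isLittleO (IsBigO.of_bound 1 ?_) hlog
  filter_upwards [eventually_ge_atTop 3] with x hx
  have : 0 ≤ 2 * log x + 2 := by linarith [log_nonneg (by linarith : (1:ℝ) ≤ x)]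
  rw [one_mul, Real.norm_eq_abs, Real.norm_eq_abs, abs_of_nonneg this]
  exact abs_logFactorialFloor_sub_le (by linarith)

lemma log_factorial_eq_sum_log (N : ℕ) : log (N ! : ℝ) = ∑ n ∈ Ioc 0 N, log n := by
  induction N with
  | zero => simp
  | succ N ih =>
    rw [sum_Ioc_succ_top (Nat.zero_le N), ← ih, Nat.factorial_succ, Nat.cast_mul,
      log_mul (by positivity) (by positivity), add_comm]

lemma log_factorial_eq_sum_vonMangoldt {N M : ℕ} (h : N ≤ M) :
    log (N ! : ℝ) = ∑ d ∈ Ioc 0 M, Λ d * (N / d : ℕ) := by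
  rw [log_factorial_eq_sum_log]
  have := sum_Ioc_mul_zeta_eq_sum Λ N
  simp only [vonMangoldt_mul_zeta, log_apply] at this
  rw [this]
  refine sum_subset (Ioc_subset_Ioc_right h) fun d hdM hdN ↦ ?_
  simp only [mem_Ioc, not_and, not_le] at hdM hdN
  simp [Nat.div_eq_of_lt (hdN hdM.1)]

noncomputable def chebyshevWeight (m : ℕ) : ℝ :=
  m - (m / 2 : ℕ) - (m / 3 : ℕ) - (m / 5 : ℕ) + (m / 30 : ℕ)

lemma chebyshevWeight_nonneg (m : ℕ) : 0 ≤ chebyshevWeight m := by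
  have h : ((m / 2 + m / 3 + m / 5 : ℕ) : ℝ) ≤ (m + m / 30 : ℕ) := by exact_mod_cast (by omega)
  push_cast at h
  rw [chebyshevWeight]
  linarith

lemma chebyshevWeight_le_one (m : ℕ) : chebyshevWeight m ≤ 1 := by
  have h : ((m + m / 30 : ℕ) : ℝ) ≤ (m / 2 + m / 3 + m / 5 + 1 : ℕ) := by exact_mod_cast (by omega)
  push_cast at h
  rw [chebyshevWeight]
  linarith

lemma chebyshevWeight_eq_one {m : ℕ} (h1 : 1 ≤ m) (h5 : m ≤ 5) : chebyshevWeight m = 1 := by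
  have h : ((m + m / 30 : ℕ) : ℝ) = (m / 2 + m / 3 + m / 5 + 1 : ℕ) := by exact_mod_cast (by omega)
  push_cast at h
  rw [chebyshevWeight]
  linarith

noncomputable def chebyshevSum (x : ℝ) : ℝ :=
  logFactorialFloor x - logFactorialFloor (x / 2) - logFactorialFloor (x / 3)
    - logFactorialFloor (x / 5) + logFactorialFloor (x / 30)

lemma logFactorialFloor_div_eq_sum (x : ℝ) (c : ℕ) :
    logFactorialFloor (x / c) = ∑ d ∈ Ioc 0 ⌊x⌋₊, Λ d * (⌊x⌋₊ / d / c : ℕ) := by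
  rw [logFactorialFloor, Nat.floor_div_natCast,
    log_factorial_eq_sum_vonMangoldt (Nat.div_le_self _ c)]
  refine sum_congr rfl fun d _ ↦ ?_
  rw [Nat.div_div_eq_div_mul, Nat.div_div_eq_div_mul, Nat.mul_comm c d]

lemma chebyshevSum_eq_sum (x : ℝ) :
    chebyshevSum x = ∑ d ∈ Ioc 0 ⌊x⌋₊, Λ d * chebyshevWeight (⌊x⌋₊ / d) := by
  have h := logFactorialFloor_div_eq_sum x
  have h1 := h 1
  have h2 := h 2
  have h3 := h 3
  have h5 := h 5
  have h30 := h 30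
  simp only [Nat.cast_ofNat, Nat.cast_one, div_one, Nat.div_one] at h1 h2 h3 h5 h30
  rw [chebyshevSum, h1, h2, h3, h5, h30]
  simp only [← sum_sub_distrib, ← sum_add_distrib, chebyshevWeight]
  refine sum_congr rfl fun d _ ↦ ?_
  ring

lemma chebyshevSum_le_psi (x : ℝ) : chebyshevSum x ≤ ψ x := by
  rw [chebyshevSum_eq_sum, Chebyshev.psi]
  refine sum_le_sum fun d _ ↦ ?_
  exact mul_le_of_le_one_right vonMangoldt_nonneg (chebyshevWeight_le_one _)

lemma psi_sub_psi_div_six_le_chebyshevSum (x : ℝ) : ψ x - ψ (x / 6) ≤ chebyshevSum x := by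
  set N := ⌊x⌋₊
  have hsplit : ψ x - ψ (x / 6) = ∑ d ∈ Ioc (N / 6) N, Λ d := by
    rw [Chebyshev.psi, Chebyshev.psi, Nat.floor_div_ofNat, sub_eq_iff_eq_add',
      sum_Ioc_consecutive _ (Nat.zero_le _) (Nat.div_le_self N 6)]
  have hweight : ∀ d ∈ Ioc (N / 6) N, Λ d = Λ d * chebyshevWeight (N / d) := by
    intro d hd
    rw [mem_Ioc] at hd
    rw [chebyshevWeight_eq_one, mul_one]
    · exact (Nat.one_le_div_iff (by omega)).2 hd.2
    · exact Nat.lt_succ_iff.1 ((Nat.div_lt_iff_lt_mul (by omega)).2 (by omega))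
  rw [hsplit, sum_congr rfl hweight, chebyshevSum_eq_sum]
  exact sum_le_sum_of_subset_of_nonneg (Ioc_subset_Ioc_left (Nat.zero_le _))
    fun d _ _ ↦ mul_nonneg vonMangoldt_nonneg (chebyshevWeight_nonneg _)

noncomputable def chebyshevConstant : ℝ := log 2 / 2 + log 3 / 3 + log 5 / 5 - log 30 / 30

lemma chebyshevConstant_pos : 0 < chebyshevConstant := by
  have h30 : log 30 = log 2 + log 3 + log 5 := by
    rw [show (30 : ℝ) = 2 * 3 * 5 by norm_num, log_mul (by norm_num) (by norm_num),
      log_mul (by norm_num) (by norm_num)]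
  have h2 : 0 < log 2 := log_pos (by norm_num)
  have h3 : 0 < log 3 := log_pos (by norm_num)
  have h5 : 0 < log 5 := log_pos (by norm_num)
  rw [chebyshevConstant, h30]
  linarith

lemma stirlingMain_alternating_sum {x : ℝ} (hx : 0 < x) :
    stirlingMain x - stirlingMain (x / 2) - stirlingMain (x / 3) - stirlingMain (x / 5)
      + stirlingMain (x / 30) = chebyshevConstant * x := by
  simp only [stirlingMain, chebyshevConstant]
  rw [log_div hx.ne' (by norm_num), log_div hx.ne' (by norm_num), log_div hx.ne' (by norm_num),
    log_div hx.ne' (by norm_num)]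
  ring

lemma isLittleO_chebyshevSum_sub :
    (fun x ↦ chebyshevSum x - chebyshevConstant * x) =o[atTop] id := by
  have hL := isLittleO_logFactorialFloor_sub_stirlingMain
  have hdiv (c : ℝ) (hc : 0 < c) :
      (fun x ↦ logFactorialFloor (x / c) - stirlingMain (x / c)) =o[atTop] id := by
    have := hL.comp_tendsto (tendsto_id.atTop_div_const hc)
    refine this.trans_isBigO (IsBigO.of_bound (1 / c) (Eventually.of_forall fun x ↦ ?_))
    simp [abs_of_pos hc, div_eq_inv_mul]
  have hsum := (((hL.sub (hdiv 2 two_pos)).sub (hdiv 3 three_pos)).sub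
    (hdiv 5 (by norm_num))).add (hdiv 30 (by norm_num))
  refine hsum.congr' ?_ EventuallyEq.rfl
  filter_upwards [eventually_gt_atTop 0] with x hx
  simp only [chebyshevSum, ← stirlingMain_alternating_sum hx]
  ring

lemma le_mul_add_of_sub_le_mul {f : ℝ → ℝ} (hf : Monotone f) {q α x₀ : ℝ} (hq : 1 < q)
    (hα : 0 ≤ α) (hx₀ : 0 < x₀) (h : ∀ x ≥ x₀, f x - f (x / q) ≤ α * x) {x : ℝ} (hx : 0 ≤ x) :
    f x ≤ q / (q - 1) * α * x + f x₀ := by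
  have hq0 : 0 < q - 1 := sub_pos.2 hq
  suffices ∀ n : ℕ, ∀ x, 0 ≤ x → x ≤ q ^ n * x₀ → f x ≤ q / (q - 1) * α * x + f x₀ by
    obtain ⟨n, hn⟩ := pow_unbounded_of_one_lt (x / x₀) hq
    exact this n x hx ((div_le_iff₀ hx₀).1 hn.le)
  intro n
  induction n with
  | zero =>
    intro x hx hxn
    have : 0 ≤ q / (q - 1) * α * x := by positivity
    linarith [hf (by simpa using hxn : x ≤ x₀)]
  | succ n ih =>
    intro x hx hxn
    rcases le_or_gt x x₀ with hxx₀ | hxx₀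
    · have : 0 ≤ q / (q - 1) * α * x := by positivity
      linarith [hf hxx₀]
    have hstep := h x hxx₀.le
    have hrec := ih (x / q) (by positivity) ((div_le_iff₀ (by linarith)).2 (by
      rw [pow_succ] at hxn; linarith))
    have : q / (q - 1) * α * (x / q) = α * x / (q - 1) := by
      field_simp
    calc f x ≤ α * x + α * x / (q - 1) + f x₀ := by linarith
      _ = q / (q - 1) * α * x + f x₀ := by field_simp; ring

lemma eventually_psi_ge {ε : ℝ} (hε : 0 < ε) :
    ∀ᶠ x in atTop, (chebyshevConstant - ε) * x ≤ ψ x := by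
  filter_upwards [isLittleO_chebyshevSum_sub.def hε, eventually_ge_atTop 0] with x hx hx0
  rw [Real.norm_eq_abs, id, Real.norm_eq_abs, abs_of_nonneg hx0, abs_le] at hx
  linarith [chebyshevSum_le_psi x]

lemma eventually_psi_le {ε : ℝ} (hε : 0 < ε) :
    ∀ᶠ x in atTop, ψ x ≤ (6 / 5 * chebyshevConstant + ε) * x := by
  obtain ⟨x₀, hx₀⟩ := eventually_atTop.1
    ((isLittleO_chebyshevSum_sub.def (half_pos hε)).and (eventually_gt_atTop 0))
  have hstep : ∀ x ≥ x₀, ψ x - ψ (x / 6) ≤ (chebyshevConstant + ε / 2) * x := by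
    intro x hx
    obtain ⟨hS, hx0⟩ := hx₀ x hx
    rw [Real.norm_eq_abs, id, Real.norm_eq_abs, abs_of_pos hx0, abs_le] at hS
    linarith [psi_sub_psi_div_six_le_chebyshevSum x]
  have hbound (x : ℝ) (hx : 0 ≤ x) := le_mul_add_of_sub_le_mul Chebyshev.psi_mono
    (by norm_num) (by linarith [chebyshevConstant_pos]) (hx₀ x₀ le_rfl).2 hstep hx
  filter_upwards [eventually_ge_atTop (5 * ψ x₀ / (2 * ε)), eventually_ge_atTop 0] with x hx hx0
  have h1 := hbound x hx0
  rw [div_le_iff₀ (by positivity)] at hx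
  norm_num at h1
  linarith

lemma isLittleO_sqrt_id : Real.sqrt =o[atTop] id := by
  rw [isLittleO_iff_tendsto fun x hx ↦ by simp [show x = 0 from hx]]
  simp only [id, sqrt_div_self]
  exact tendsto_inv_atTop_zero.comp tendsto_sqrt_atTop

lemma eventually_theta_ge {ε : ℝ} (hε : 0 < ε) :
    ∀ᶠ x in atTop, (chebyshevConstant - ε) * x ≤ θ x := by
  have hdiff := (Chebyshev.isBigO_psi_sub_theta_sqrt.trans_isLittleO isLittleO_sqrt_id).def
    (half_pos hε)
  filter_upwards [hdiff, eventually_psi_ge (half_pos hε), eventually_ge_atTop 0]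
    with x hdiff hψ hx0
  rw [Pi.sub_apply, Real.norm_eq_abs, id, Real.norm_eq_abs, abs_of_nonneg hx0, abs_le] at hdiff
  linarith

lemma eventually_theta_sub_theta_half_ge {δ : ℝ} (hδ : 0 < δ) :
    ∀ᶠ x in atTop, (2 / 5 * chebyshevConstant - δ) * x ≤ θ x - θ (x / 2) := by
  have hhalf := tendsto_id.atTop_div_const (two_pos : (0 : ℝ) < 2)
  filter_upwards [eventually_theta_ge (half_pos hδ),
    hhalf.eventually (eventually_psi_le (half_pos hδ)), eventually_ge_atTop 0]
    with x hθ hψ hx0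
  simp only [id] at hψ
  linarith [Chebyshev.theta_le_psi (x / 2), mul_nonneg hδ.le hx0]

lemma eventually_theta_sub_theta_half_le {δ : ℝ} (hδ : 0 < δ) :
    ∀ᶠ x in atTop, θ x - θ (x / 2) ≤ (7 / 10 * chebyshevConstant + δ) * x := by
  have hhalf := tendsto_id.atTop_div_const (two_pos : (0 : ℝ) < 2)
  filter_upwards [eventually_psi_le (half_pos hδ),
    hhalf.eventually (eventually_theta_ge (half_pos hδ)), eventually_ge_atTop 0]
    with x hψ hθ hx0
  simp only [id] at hθ
  linarith [Chebyshev.theta_le_psi x, mul_nonneg hδ.le hx0]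

def dyadicPrimeCount (n : ℕ) : ℕ := #{p ∈ Ioc (n / 2) n | p.Prime}

lemma dyadicPrimeCount_eq (n : ℕ) :
    dyadicPrimeCount n = Nat.primeCounting n - Nat.primeCounting (n / 2) := by
  simp only [dyadicPrimeCount, ← Nat.primesLE_card_eq_primeCounting,
    Nat.primesLE_eq_filter_Ioc_zero, card_filter]
  rw [← sum_Ioc_consecutive _ (Nat.zero_le _) (Nat.div_le_self n 2), Nat.add_sub_cancel_left]

lemma theta_sub_theta_half_eq (n : ℕ) :
    θ n - θ (n / 2 : ℝ) = ∑ p ∈ Ioc (n / 2) n with p.Prime, log p := by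
  rw [Chebyshev.theta, Chebyshev.theta, Nat.floor_natCast, Nat.floor_div_ofNat, Nat.floor_natCast,
    sub_eq_iff_eq_add', sum_filter, sum_filter, sum_filter,
    sum_Ioc_consecutive _ (Nat.zero_le _) (Nat.div_le_self n 2)]

lemma theta_sub_theta_half_le (n : ℕ) : θ n - θ (n / 2 : ℝ) ≤ dyadicPrimeCount n * log n := by
  rw [theta_sub_theta_half_eq, dyadicPrimeCount, ← nsmul_eq_mul, ← sum_const]
  refine sum_le_sum fun p hp ↦ ?_
  simp only [mem_filter, mem_Ioc] at hp
  exact log_le_log (by exact_mod_cast hp.2.pos) (by exact_mod_cast hp.1.2)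

lemma dyadicPrimeCount_mul_log_half_le (n : ℕ) :
    dyadicPrimeCount n * log (n / 2) ≤ θ n - θ (n / 2 : ℝ) := by
  rw [theta_sub_theta_half_eq, dyadicPrimeCount, ← nsmul_eq_mul, ← sum_const]
  refine sum_le_sum fun p hp ↦ ?_
  simp only [mem_filter, mem_Ioc] at hp
  have hn : (0 : ℝ) < n / 2 := by
    have : 1 ≤ n := hp.2.one_lt.le.trans hp.1.2
    positivity
  refine log_le_log hn ?_
  rw [div_le_iff₀ two_pos]
  exact_mod_cast (by omega : n ≤ p * 2)

lemma dyadicPrimeCount_one : dyadicPrimeCount 1 = 0 := by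
  decide

lemma dyadicPrimeCount_succ_le (n : ℕ) : dyadicPrimeCount (n + 1) ≤ dyadicPrimeCount n + 1 := by
  refine (card_le_card fun p hp ↦ ?_).trans (card_insert_le (n + 1) _)
  simp only [mem_filter, mem_Ioc, mem_insert] at hp ⊢
  rcases hp.1.2.eq_or_lt with h | h
  · exact Or.inl h
  · exact Or.inr ⟨⟨by omega, by omega⟩, hp.2⟩

lemma div_log_le_div_log {x y : ℝ} (hx : exp 1 ≤ x) (hxy : x ≤ y) : x / log x ≤ y / log y := by
  have hx0 : 0 < x := (exp_pos 1).trans_le hx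
  have hlogy : 0 < log y :=
    log_pos (lt_of_lt_of_le (by linarith [add_one_le_exp (1 : ℝ)]) (hx.trans hxy))
  rw [← inv_div (log x), ← inv_div (log y)]
  exact inv_anti₀ (div_pos hlogy (hx0.trans_le hxy))
    (log_div_self_antitoneOn hx (hx.trans hxy) hxy)

lemma tendsto_div_log_atTop : Tendsto (fun x ↦ x / log x) atTop atTop := by
  refine tendsto_atTop.2 fun K ↦ ?_
  have hc : (0 : ℝ) < |K| + 1 := by positivity
  filter_upwards [isLittleO_log_id_atTop.def (inv_pos.2 hc), eventually_gt_atTop 1]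
    with x hlog hx
  have hlogpos : 0 < log x := log_pos hx
  rw [Real.norm_eq_abs, Real.norm_eq_abs, id, abs_of_pos hlogpos, abs_of_pos (by linarith : 0 < x),
    inv_mul_eq_div, le_div_iff₀ hc] at hlog
  rw [le_div_iff₀ hlogpos]
  linarith [mul_nonneg (sub_nonneg.2 (le_abs_self K)) hlogpos.le]

lemma eventually_four_mul_div_log_ge :
    ∀ᶠ x in atTop, 39 / 10 * (x / log x) ≤ 4 * x / log (4 * x) := by
  filter_upwards [tendsto_log_atTop.eventually_ge_atTop (39 * log 4), eventually_gt_atTop 1]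
    with x hlog hx
  have hlogpos : 0 < log x := log_pos hx
  have hlog4 : 0 < log 4 := log_pos (by norm_num)
  rw [log_mul (by norm_num) (by linarith), mul_div_assoc', div_le_div_iff₀ hlogpos (by linarith)]
  linarith [mul_le_mul_of_nonneg_left hlog (by linarith : (0 : ℝ) ≤ x)]

lemma eventually_div_log_le_dyadicPrimeCount :
    ∀ᶠ n : ℕ in atTop, 39 / 100 * chebyshevConstant * (n / log n) ≤ dyadicPrimeCount n := by
  have hA := chebyshevConstant_pos
  filter_upwards [tendsto_natCast_atTop_atTop.eventually
    (eventually_theta_sub_theta_half_ge (by positivity : 0 < chebyshevConstant / 100)),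
    eventually_ge_atTop 2] with n hθ hn
  have hlog : 0 < log n := log_pos (by exact_mod_cast hn)
  rw [← mul_div_assoc, div_le_iff₀ hlog]
  linarith [theta_sub_theta_half_le n]

lemma eventually_dyadicPrimeCount_le :
    ∀ᶠ n : ℕ in atTop,
      (dyadicPrimeCount n : ℝ) ≤ 71 / 50 * chebyshevConstant * ((n / 2) / log (n / 2)) := by
  have hA := chebyshevConstant_pos
  filter_upwards [tendsto_natCast_atTop_atTop.eventually
    (eventually_theta_sub_theta_half_le (by positivity : 0 < chebyshevConstant / 100)),
    eventually_ge_atTop 3] with n hθ hn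
  have hlog : 0 < log (n / 2 : ℝ) :=
    log_pos (by rw [lt_div_iff₀ two_pos]; exact_mod_cast (by omega))
  rw [← mul_div_assoc, le_div_iff₀ hlog]
  linarith [dyadicPrimeCount_mul_log_half_le n]

lemma eventually_add_le_dyadicPrimeCount (k : ℕ) :
    ∀ᶠ M in atTop, ∀ N, 2 * M ≤ N → dyadicPrimeCount M + k ≤ dyadicPrimeCount N := by
  have hA := chebyshevConstant_pos
  obtain ⟨N₀, hN₀⟩ := eventually_atTop.1 eventually_div_log_le_dyadicPrimeCount
  have hhalf : Tendsto (fun M : ℕ ↦ (M / 2 : ℝ)) atTop atTop :=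
    tendsto_natCast_atTop_atTop.atTop_div_const two_pos
  filter_upwards [eventually_ge_atTop N₀, eventually_dyadicPrimeCount_le,
    hhalf.eventually eventually_four_mul_div_log_ge,
    hhalf.eventually ((tendsto_div_log_atTop.const_mul_atTop (by positivity :
      0 < chebyshevConstant / 10)).eventually_ge_atTop k),
    tendsto_natCast_atTop_atTop.eventually (eventually_ge_atTop (exp 1 / 2))]
    with M hM hupper hratio hlarge hexp N hN
  have hNM : (2 * M : ℝ) ≤ N := by exact_mod_cast hN
  have hmono := div_log_le_div_log (by linarith) hNM
  rw [show 4 * (M / 2 : ℝ) = 2 * M by ring] at hratio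
  have : (dyadicPrimeCount M : ℝ) + k ≤ dyadicPrimeCount N := calc
    _ ≤ 71 / 50 * chebyshevConstant * ((M / 2) / log (M / 2))
        + chebyshevConstant / 10 * ((M / 2) / log (M / 2)) := add_le_add hupper hlarge
    -- `39/100 * 39/10 = 1.521` exceeds `71/50 + 1/10 = 1.52`
    _ ≤ 39 / 100 * chebyshevConstant * (39 / 10 * ((M / 2) / log (M / 2))) := by
        linarith [(Nat.cast_nonneg k).trans hlarge]
    _ ≤ 39 / 100 * chebyshevConstant * (2 * M / log (2 * M)) := by gcongr
    _ ≤ 39 / 100 * chebyshevConstant * (N / log N) := by gcongr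
    _ ≤ dyadicPrimeCount N := hN₀ N (by omega)
  exact_mod_cast this

lemma tendsto_dyadicPrimeCount : Tendsto dyadicPrimeCount atTop atTop := by
  have hA := chebyshevConstant_pos
  refine tendsto_natCast_atTop_iff.1
    (tendsto_atTop_mono' _ eventually_div_log_le_dyadicPrimeCount ?_)
  exact (tendsto_div_log_atTop.comp tendsto_natCast_atTop_atTop).const_mul_atTop (by positivity)

lemma pi'_sub_pi'_half (x : ℝ) : pi' x - pi' (x / 2) = dyadicPrimeCount ⌊x⌋₊ := by
  rw [pi', pi', Nat.floor_div_ofNat, dyadicPrimeCount_eq]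

lemma ramanujanPrime_eq_ramanujanSeq : ramanujanPrime = ramanujanSeq dyadicPrimeCount := by
  funext n
  simp only [ramanujanPrime, ramanujanSeq, pi'_sub_pi'_half]
  congr 1
  ext R
  refine and_congr_right fun _ ↦ ⟨fun h N hN ↦ ?_, fun h x hx ↦ h _ (Nat.le_floor hx)⟩
  simpa using h N (by exact_mod_cast hN)

lemma strictMono_ramanujanPrime : StrictMono ramanujanPrime := by
  rw [ramanujanPrime_eq_ramanujanSeq]
  exact strictMono_ramanujanSeq tendsto_dyadicPrimeCount dyadicPrimeCount_one
    dyadicPrimeCount_succ_le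

lemma ramanujanPrime_add_le_two_mul (k : ℕ) :
    ∀ᶠ m in atTop, ramanujanPrime (m + k) ≤ 2 * ramanujanPrime m := by
  rw [ramanujanPrime_eq_ramanujanSeq]
  exact ramanujanSeq_add_le_two_mul tendsto_dyadicPrimeCount eventually_add_le_dyadicPrimeCount k

lemma piR_eq_ncard {x : ℝ} (hx : 0 ≤ x) :
    piR x = {n | ramanujanPrime (n + 1) ≤ ⌊x⌋₊}.ncard := by
  have hinj : Function.Injective fun n ↦ ramanujanPrime (n + 1) :=
    strictMono_ramanujanPrime.injective.comp (add_left_injective 1)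
  rw [piR, ← Set.ncard_image_of_injective {n | ramanujanPrime (n + 1) ≤ ⌊x⌋₊} hinj]
  congr 1
  ext R
  simp only [IsRamanujanPrime, Set.mem_ofPred, Set.mem_image, ← Nat.le_floor_iff hx]
  constructor
  · rintro ⟨⟨n, hn, rfl⟩, hR⟩
    exact ⟨n - 1, by rwa [Nat.sub_add_cancel hn], by rw [Nat.sub_add_cancel hn]⟩
  · rintro ⟨n, hn, rfl⟩
    exact ⟨⟨n + 1, by omega, rfl⟩, hn⟩

theorem piR_diff_tendsto_atTop :
    Tendsto (fun x : ℝ => piR x - piR (x / 2)) atTop atTop := by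
  have hs : StrictMono fun n ↦ ramanujanPrime (n + 1) :=
    strictMono_ramanujanPrime.comp (strictMono_id.add_const 1)
  have hdouble (k : ℕ) : ∀ᶠ m in atTop, ramanujanPrime (m + k + 1) ≤ 2 * ramanujanPrime (m + 1) :=
    ((tendsto_add_atTop_nat 1).eventually (ramanujanPrime_add_le_two_mul k)).mono
      fun m hm ↦ by rwa [add_right_comm] at hm
  refine ((tendsto_ncard_sub_ncard_half hs hdouble).comp tendsto_nat_floor_atTop).congr' ?_
  filter_upwards [eventually_ge_atTop 0] with x hx
  rw [Function.comp_apply, piR_eq_ncard hx, piR_eq_ncard (by positivity), Nat.floor_div_ofNat]
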